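/- Let z > 0 be real and n ≥ 0 an integer. Then the derivative of ν ↦ J_ν(z) at ν = n equals (log(z/2) + γ)·J_n(z) − (z/2)^n · ∑_{m=0}^∞ [(−z²/4)^m/(m!·(m+n)!)] · H_{m+n}, where γ is the Euler–Mascheroni constant and H_m = ∑_{j=1}^m 1/j (with H_0 = 0). -/

import Mathlib

open scoped BigOperators

/-- The reciprocal of the complex Gamma function, an entire function
(Mathlib's `Complex.Gamma` vanishes at nonpositive integers, so the inverse is `0` there). -/
noncomputable def Grec (t : ℂ) : ℂ := (Complex.Gamma t)⁻¹

/-- `G k t` is the `k`-th derivative of the reciprocal Gamma function at `t`. -/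
noncomputable def G (k : ℕ) (t : ℂ) : ℂ := iteratedDeriv k Grec t

/-- The Maclaurin coefficients of `1/Γ`: `c j = G^{(j)}(0)/j!`. -/
noncomputable def mcCoeff (j : ℕ) : ℂ := iteratedDeriv j Grec 0 / (j.factorial : ℂ)

/-- Bessel function of the first kind `J_ν(z)` for real `z > 0` and complex order `ν`,
with `(z/2)^ν = exp (ν log (z/2))`. -/
noncomputable def besselJ (z : ℝ) (ν : ℂ) : ℂ :=
  Complex.exp (ν * Complex.log ((z : ℂ) / 2)) *
    ∑' m : ℕ, (-(z : ℂ) ^ 2 / 4) ^ m / ((m.factorial : ℂ) * Complex.Gamma (ν + 1 + m))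

/-- Pochhammer symbol `(t)_m = t (t+1) ⋯ (t+m-1)`. -/
noncomputable def poch (t : ℂ) (m : ℕ) : ℂ := ∏ i ∈ Finset.range m, (t + i)

/-- `P m k t = (1/k!) dᵏ/dtᵏ (t)_m`. -/
noncomputable def P (m k : ℕ) (t : ℂ) : ℂ :=
  ((k.factorial : ℂ))⁻¹ * iteratedDeriv k (fun s => poch s m) t

/-- `Q m k t = (1/k!) dᵏ/dtᵏ (1/(t)_m)`. -/
noncomputable def Q (m k : ℕ) (t : ℂ) : ℂ :=
  ((k.factorial : ℂ))⁻¹ * iteratedDeriv k (fun s => (poch s m)⁻¹) t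

/-- Signed Stirling numbers of the first kind: `s(n,k)` is the coefficient of `x^k`
in `x(x-1)⋯(x-n+1)`. -/
noncomputable def stirS (n k : ℕ) : ℤ := (descPochhammer ℤ n).coeff k

/-- Modified generalized harmonic numbers `Ĥ_m^{(k)}`. -/
noncomputable def Hhat (m k : ℕ) : ℝ :=
  if m = 0 then (if k = 0 then 1 else 0)
  else ∑ j ∈ Finset.Icc 1 m, (-1 : ℝ) ^ (j - 1) * (m.choose j) / (j : ℝ) ^ k

/-- Digamma function `ψ = Γ'/Γ`. -/
noncomputable def digamma (t : ℂ) : ℂ := deriv Complex.Gamma t / Complex.Gamma t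

/-! Termwise differentiation in the order. For `Re t ≥ 1/2` the recursion `Γ(t+1)⁻¹ = Γ(t)⁻¹/t`
gives `|Γ(t+k)⁻¹| ≤ 2ᵏ |Γ(t)⁻¹|`, so on `-1/2 < Re ν` the holomorphic terms `xᵐ/m! · Γ(ν+1+m)⁻¹`
are locally dominated by `C (2|x|)ᵐ/m!` and the series may be differentiated term by term. At
`ν = n` everything is explicit: `Γ(k+1)⁻¹ = 1/k!` and `Γ'(k+1) = k! (H_k - γ)` give
`(Γ⁻¹)'(k+1) = (γ - H_k)/k!`. -/

open Complex Nat

@[fun_prop]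
lemma differentiable_Grec : Differentiable ℂ Grec := by
  have h : Differentiable ℂ fun t => (Gamma t)⁻¹ := by
    simpa only [one_div] using differentiable_one_div_Gamma
  exact h

lemma Grec_add_one {t : ℂ} (ht : t ≠ 0) : Grec (t + 1) = Grec t * t⁻¹ := by
  rw [Grec, Gamma_add_one t ht, mul_inv, mul_comm, Grec]

lemma Grec_nat_add_one (k : ℕ) : Grec (k + 1) = (k ! : ℂ)⁻¹ := by
  rw [Grec, Gamma_nat_eq_factorial]

lemma deriv_Grec_nat_add_one (k : ℕ) :
    deriv Grec (k + 1) = (Real.eulerMascheroniConstant - harmonic k) / k ! := by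
  have hΓ : Gamma (k + 1) ≠ 0 := by
    rw [Gamma_nat_eq_factorial]; exact_mod_cast k.factorial_ne_zero
  have hk : (k ! : ℂ) ≠ 0 := by exact_mod_cast k.factorial_ne_zero
  have h : HasDerivAt Grec _ (k + 1) := (hasDerivAt_Gamma_nat k).inv hΓ
  rw [h.deriv, Gamma_nat_eq_factorial]
  field_simp
  ring

lemma norm_Grec_add_nat_le {t : ℂ} (ht : 1 / 2 ≤ t.re) (k : ℕ) :
    ‖Grec (t + k)‖ ≤ 2 ^ k * ‖Grec t‖ := by
  induction k with
  | zero => simp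
  | succ k ih =>
    have hre : 1 / 2 ≤ (t + k).re := by
      simp only [add_re, natCast_re]; linarith [k.cast_nonneg (α := ℝ)]
    have hne : t + k ≠ 0 := fun h => by norm_num [h] at hre
    have hinv : ‖(t + k)⁻¹‖ ≤ 2 := by
      rw [norm_inv, show (2 : ℝ) = (1 / 2)⁻¹ by norm_num]
      exact inv_anti₀ (by norm_num) (hre.trans (re_le_norm _))
    calc ‖Grec (t + (k + 1 : ℕ))‖ = ‖Grec (t + k)‖ * ‖(t + k)⁻¹‖ := by
          rw [Nat.cast_succ, ← add_assoc, Grec_add_one hne, norm_mul]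
      _ ≤ 2 ^ k * ‖Grec t‖ * 2 := by gcongr
      _ = 2 ^ (k + 1) * ‖Grec t‖ := by ring

lemma exists_norm_Grec_add_le (R : ℝ) :
    ∃ C, ∀ (m : ℕ) (ν : ℂ), -1 / 2 ≤ ν.re → ‖ν‖ ≤ R → ‖Grec (ν + 1 + m)‖ ≤ 2 ^ m * C := by
  obtain ⟨C, hC⟩ := (isCompact_closedBall (0 : ℂ) (R + 1)).exists_bound_of_continuousOn
    differentiable_Grec.continuous.continuousOn
  refine ⟨C, fun m ν hre hR => ?_⟩
  have h1 : 1 / 2 ≤ (ν + 1).re := by simp only [add_re, one_re]; linarith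
  have h2 : ν + 1 ∈ Metric.closedBall (0 : ℂ) (R + 1) := by
    rw [mem_closedBall_zero_iff]
    exact (norm_add_le _ _).trans (by simpa using hR)
  exact (norm_Grec_add_nat_le h1 m).trans (by gcongr; exact hC _ h2)

noncomputable def besselJSeries (x ν : ℂ) : ℂ := ∑' m : ℕ, x ^ m / m ! * Grec (ν + 1 + m)

lemma besselJ_eq_exp_mul_besselJSeries (z : ℝ) (ν : ℂ) :
    besselJ z ν = exp (ν * log ((z : ℂ) / 2)) * besselJSeries (-(z : ℂ) ^ 2 / 4) ν := by
  simp only [besselJ, besselJSeries, Grec, div_eq_mul_inv, mul_inv, mul_assoc]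

lemma pow_div_factorial_mul_Grec_nat (x : ℂ) (n m : ℕ) :
    x ^ m / m ! * Grec (n + 1 + m) = x ^ m / (m ! * (m + n) ! : ℂ) := by
  rw [show (n + 1 + m : ℂ) = (m + n : ℕ) + 1 by push_cast; ring, Grec_nat_add_one,
    div_mul_eq_div_div, div_eq_mul_inv _ ((m + n) ! : ℂ)]

lemma exists_summable_bound_besselJSeries (x : ℂ) {ν₀ : ℂ} (hν₀ : -1 / 2 < ν₀.re) :
    ∃ U : Set ℂ, IsOpen U ∧ ν₀ ∈ U ∧ ∃ u : ℕ → ℝ, Summable u ∧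
      ∀ (m : ℕ), ∀ ν ∈ U, ‖x ^ m / m ! * Grec (ν + 1 + m)‖ ≤ u m := by
  obtain ⟨C, hC⟩ := exists_norm_Grec_add_le (‖ν₀‖ + 1)
  refine ⟨{ν | -1 / 2 < ν.re} ∩ Metric.ball 0 (‖ν₀‖ + 1),
    (isOpen_lt continuous_const continuous_re).inter Metric.isOpen_ball, ⟨hν₀, by simp⟩,
    fun m => C * ((2 * ‖x‖) ^ m / m !), (Real.summable_pow_div_factorial _).mul_left C,
    fun m ν ⟨hre, hR⟩ => ?_⟩
  rw [norm_mul, norm_div, norm_pow, norm_natCast]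
  calc ‖x‖ ^ m / m ! * ‖Grec (ν + 1 + m)‖ ≤ ‖x‖ ^ m / m ! * (2 ^ m * C) := by
        gcongr
        exact hC m ν hre.le (mem_ball_zero_iff.mp hR).le
    _ = C * ((2 * ‖x‖) ^ m / m !) := by ring

lemma differentiableAt_besselJSeries (x : ℂ) {ν₀ : ℂ} (hν₀ : -1 / 2 < ν₀.re) :
    DifferentiableAt ℂ (besselJSeries x) ν₀ := by
  obtain ⟨U, hU, hν₀U, u, hu, hle⟩ := exists_summable_bound_besselJSeries x hν₀
  exact (differentiableOn_tsum_of_summable_norm hu (fun m => by fun_prop) hU hle).differentiableAt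
    (hU.mem_nhds hν₀U)

lemma hasSum_deriv_besselJSeries (x : ℂ) {ν₀ : ℂ} (hν₀ : -1 / 2 < ν₀.re) :
    HasSum (fun m : ℕ => x ^ m / m ! * deriv Grec (ν₀ + 1 + m)) (deriv (besselJSeries x) ν₀) := by
  obtain ⟨U, hU, hν₀U, u, hu, hle⟩ := exists_summable_bound_besselJSeries x hν₀
  refine (hasSum_deriv_of_summable_norm hu (fun m => by fun_prop) hU hle hν₀U).congr_fun
    fun m => ?_
  rw [deriv_const_mul _ (by fun_prop)]
  simp only [add_assoc, deriv_comp_add_const]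

lemma summable_besselJSeries (x : ℂ) {ν : ℂ} (hν : -1 / 2 < ν.re) :
    Summable fun m : ℕ => x ^ m / m ! * Grec (ν + 1 + m) := by
  obtain ⟨U, -, hνU, u, hu, hle⟩ := exists_summable_bound_besselJSeries x hν
  exact .of_norm_bounded hu fun m => hle m ν hνU

lemma besselJSeries_nat (x : ℂ) (n : ℕ) :
    besselJSeries x n = ∑' m : ℕ, x ^ m / (m ! * (m + n) ! : ℂ) :=
  tsum_congr (pow_div_factorial_mul_Grec_nat x n)

lemma hasDerivAt_besselJ (z : ℝ) {ν : ℂ} (hν : -1 / 2 < ν.re) :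
    HasDerivAt (besselJ z)
      (log ((z : ℂ) / 2) * besselJ z ν +
        exp (ν * log ((z : ℂ) / 2)) * deriv (besselJSeries (-(z : ℂ) ^ 2 / 4)) ν) ν := by
  have hexp := (hasDerivAt_mul_const (log ((z : ℂ) / 2))).cexp (x := ν)
  simp only [funext (besselJ_eq_exp_mul_besselJSeries z)]
  exact (hexp.fun_mul (differentiableAt_besselJSeries _ hν).hasDerivAt).congr_deriv (by ring)

lemma deriv_besselJSeries_nat (x : ℂ) (n : ℕ) :
    deriv (besselJSeries x) n = Real.eulerMascheroniConstant * besselJSeries x n -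
      ∑' m : ℕ, x ^ m / (m ! * (m + n) ! : ℂ) * ∑ j ∈ Finset.Icc 1 (m + n), (1 : ℂ) / j := by
  have hn : -1 / 2 < (n : ℂ).re := by simp only [natCast_re]; linarith [n.cast_nonneg (α := ℝ)]
  set a : ℕ → ℂ := fun m => x ^ m / (m ! * (m + n) ! : ℂ)
  set H : ℕ → ℂ := fun m => ∑ j ∈ Finset.Icc 1 (m + n), (1 : ℂ) / j
  have hterm (m : ℕ) :
      x ^ m / m ! * deriv Grec (n + 1 + m) = Real.eulerMascheroniConstant * a m - a m * H m := by
    have hm : (m ! : ℂ) ≠ 0 := by exact_mod_cast m.factorial_ne_zero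
    have hmn : ((m + n) ! : ℂ) ≠ 0 := by exact_mod_cast (m + n).factorial_ne_zero
    rw [show (n + 1 + m : ℂ) = (m + n : ℕ) + 1 by push_cast; ring, deriv_Grec_nat_add_one,
      harmonic_eq_sum_Icc]
    simp only [a, H, Rat.cast_sum, Rat.cast_inv, Rat.cast_natCast, one_div]
    field_simp
  have hderiv := (hasSum_deriv_besselJSeries x hn).congr_fun fun m => (hterm m).symm
  have ha : Summable a := (summable_besselJSeries x hn).congr (pow_div_factorial_mul_Grec_nat x n)
  have haH : Summable fun m => a m * H m :=
    ((ha.mul_left _).sub hderiv.summable).congr fun _ => sub_sub_cancel _ _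
  rw [← hderiv.tsum_eq, (ha.mul_left _).tsum_sub haH, tsum_mul_left, besselJSeries_nat]

theorem deriv_besselJ_nat_general (z : ℝ) (n : ℕ) :
    deriv (fun ν => besselJ z ν) (n : ℂ) =
      (Complex.log ((z : ℂ) / 2) + (Real.eulerMascheroniConstant : ℂ)) * besselJ z (n : ℂ) -
        Complex.exp ((n : ℂ) * Complex.log ((z : ℂ) / 2)) *
          ∑' m : ℕ, (-(z : ℂ) ^ 2 / 4) ^ m / ((m.factorial : ℂ) * ((m + n).factorial : ℂ)) *
            ∑ j ∈ Finset.Icc 1 (m + n), (1 : ℂ) / (j : ℂ) := by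
  have hn : -1 / 2 < (n : ℂ).re := by simp only [natCast_re]; linarith [n.cast_nonneg (α := ℝ)]
  rw [(hasDerivAt_besselJ z hn).deriv, deriv_besselJSeries_nat,
    besselJ_eq_exp_mul_besselJSeries z n]
  ring

/-- First derivative at a nonnegative integer order:
`∂/∂ν J_ν(z)|_{ν=n} = (log(z/2) + γ) Jₙ(z) − (z/2)ⁿ ∑ₘ (−z²/4)ᵐ/(m!(m+n)!) H_{m+n}`. -/
theorem deriv_besselJ_nat (z : ℝ) (hz : 0 < z) (n : ℕ) :
    deriv (fun ν => besselJ z ν) (n : ℂ) =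
      (Complex.log ((z : ℂ) / 2) + (Real.eulerMascheroniConstant : ℂ)) * besselJ z (n : ℂ) -
        Complex.exp ((n : ℂ) * Complex.log ((z : ℂ) / 2)) *
          ∑' m : ℕ, (-(z : ℂ) ^ 2 / 4) ^ m / ((m.factorial : ℂ) * ((m + n).factorial : ℂ)) *
            ∑ j ∈ Finset.Icc 1 (m + n), (1 : ℂ) / (j : ℂ) :=
  deriv_besselJ_nat_general z n
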